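/- arXiv:1009.2474 — 2 statements merged into one kernel-verified Lean document; each statement's English description precedes it below -/
import Mathlib

section
/- For every real number t and all nonnegative integers m and n, the mixed partial derivative ∂_x^m ∂_y^n [ (e^{−x} + e^{−y} − 1)^{(−1−t)/2} · (e^x + e^y − 1)^{(1−t)/2} ] evaluated at (x,y) = (0,0) equals Σ_{m'=0}^{m} Σ_{ℓ₁=0}^{m'} Σ_{ℓ₂=0}^{m−m'} C(m,m') · S(m',ℓ₁) · S(m−m',ℓ₂) · (−1)^{m−m'} · ((1−t)/2)_{ℓ₁} · ((−1−t)/2)_{ℓ₂} · (1 − ℓ₁ + ℓ₂)^n, where C(m,m') is the binomial coefficient, (s)_ℓ = s(s−1)⋯(s−ℓ+1) is the falling factorial (with (s)_0 = 1), and S(a,ℓ) is the Stirling number of the second kind. -/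
/-!
Mixed partial derivatives of a smooth function commute, so we may differentiate in `x` first.
For fixed `y` the function is `(c' + e^{-x})^α (c + e^x)^β` with `c = e^y - 1`, `c' = e^{-y} - 1`,
and Leibniz's rule reduces everything to `(d/dz)^j (c + e^z)^s`, which equals
`∑ₗ S(j,l) (s)_l e^{lz} (c + e^z)^{s-l}`: differentiating the `l`-th term produces the `l`-th and
`(l+1)`-st terms with weights `l` and `s - l`, which is the recurrence of `stirling2`.
At `x = 0` the term indexed by `(l₁, l₂)` is a multiple of `e^{(β - l₁) y} e^{-(α - l₂) y}`,
and `β - α = 1`, so its `n`-th derivative at `y = 0` contributes `(1 - l₁ + l₂)^n`.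
-/

/-- Stirling numbers of the second kind: `stirling2 n k` is the number of
partitions of an `n`-element set into `k` nonempty blocks. -/
def stirling2 : ℕ → ℕ → ℕ
  | 0, 0 => 1
  | 0, _+1 => 0
  | _+1, 0 => 0
  | n+1, k+1 => (k + 1) * stirling2 n (k + 1) + stirling2 n k

/-- The falling factorial `(s)_ℓ = s (s-1) ⋯ (s - ℓ + 1)`, with `(s)_0 = 1`. -/
def fallingFactorial (s : ℝ) (l : ℕ) : ℝ := ∏ i ∈ Finset.range l, (s - i)

open Finset Real
open scoped ContDiff

section PartialDerivatives

open Set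

variable {E F : Type*} [NormedAddCommGroup E] [NormedSpace ℝ E]
  [NormedAddCommGroup F] [NormedSpace ℝ F] {U : Set E}

/-- Defined through `lineDeriv` rather than `fderiv`, so that on `ℝ × ℝ` it is the derivative of
the sections at every point, whether or not `f` is differentiable there. -/
noncomputable def dirDeriv (v : E) (f : E → F) : E → F := fun p => lineDeriv ℝ f p v

theorem eqOn_dirDeriv (hU : IsOpen U) {f g : E → F} (h : EqOn f g U) (v : E) :
    EqOn (dirDeriv v f) (dirDeriv v g) U := fun _ hp =>
  (h.eventuallyEq_of_mem (hU.mem_nhds hp)).lineDeriv_eq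

theorem eqOn_iterate_dirDeriv (hU : IsOpen U) {f g : E → F} (h : EqOn f g U) (v : E) (n : ℕ) :
    EqOn ((dirDeriv v)^[n] f) ((dirDeriv v)^[n] g) U := by
  induction n with
  | zero => exact h
  | succ n ih =>
    simp only [Function.iterate_succ_apply']
    exact eqOn_dirDeriv hU ih v

theorem eqOn_dirDeriv_fderiv (hU : IsOpen U) {f : E → F} (hf : ContDiffOn ℝ ∞ f U) (v : E) :
    EqOn (dirDeriv v f) (fun p => fderiv ℝ f p v) U := fun _ hp =>
  ((hf.contDiffAt (hU.mem_nhds hp)).differentiableAt (by simp)).lineDeriv_eq_fderiv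

theorem contDiffOn_dirDeriv (hU : IsOpen U) {f : E → F} (hf : ContDiffOn ℝ ∞ f U) (v : E) :
    ContDiffOn ℝ ∞ (dirDeriv v f) U :=
  ((hf.fderiv_of_isOpen hU le_rfl).clm_apply contDiffOn_const).congr
    (eqOn_dirDeriv_fderiv hU hf v)

theorem dirDeriv_dirDeriv_eq_fderiv_fderiv (hU : IsOpen U) {f : E → F} (hf : ContDiffOn ℝ ∞ f U)
    (v w : E) {p : E} (hp : p ∈ U) :
    dirDeriv v (dirDeriv w f) p = fderiv ℝ (fderiv ℝ f) p v w := by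
  have hdf : ContDiffOn ℝ ∞ (fderiv ℝ f) U := hf.fderiv_of_isOpen hU le_rfl
  have hd : DifferentiableAt ℝ (fderiv ℝ f) p :=
    (hdf.contDiffAt (hU.mem_nhds hp)).differentiableAt (by simp)
  rw [eqOn_dirDeriv hU (eqOn_dirDeriv_fderiv hU hf w) v hp]
  have := (hd.hasFDerivAt.clm_apply (hasFDerivAt_const w p)).hasLineDerivAt v
  simpa [dirDeriv] using this.lineDeriv

theorem eqOn_dirDeriv_comm (hU : IsOpen U) {f : E → F} (hf : ContDiffOn ℝ ∞ f U) (v w : E) :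
    EqOn (dirDeriv v (dirDeriv w f)) (dirDeriv w (dirDeriv v f)) U := fun p hp => by
  rw [dirDeriv_dirDeriv_eq_fderiv_fderiv hU hf v w hp,
    dirDeriv_dirDeriv_eq_fderiv_fderiv hU hf w v hp]
  refine (hf.contDiffAt (hU.mem_nhds hp)).isSymmSndFDerivAt ?_ v w
  simp only [minSmoothness_of_isRCLikeNormedField]
  exact ENat.LEInfty.out

theorem eqOn_dirDeriv_iterate_comm (hU : IsOpen U) {f : E → F} (hf : ContDiffOn ℝ ∞ f U)
    (v w : E) (n : ℕ) :
    EqOn (dirDeriv v ((dirDeriv w)^[n] f)) ((dirDeriv w)^[n] (dirDeriv v f)) U := by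
  induction n generalizing f with
  | zero => exact fun _ _ => rfl
  | succ n ih =>
    simp only [Function.iterate_succ_apply]
    exact (ih (contDiffOn_dirDeriv hU hf w)).trans
      (eqOn_iterate_dirDeriv hU (eqOn_dirDeriv_comm hU hf v w) w n)

theorem eqOn_iterate_dirDeriv_comm (hU : IsOpen U) {f : E → F} (hf : ContDiffOn ℝ ∞ f U)
    (v w : E) (m n : ℕ) :
    EqOn ((dirDeriv v)^[m] ((dirDeriv w)^[n] f)) ((dirDeriv w)^[n] ((dirDeriv v)^[m] f)) U := by
  induction m generalizing f with
  | zero => exact fun _ _ => rfl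
  | succ m ih =>
    simp only [Function.iterate_succ_apply]
    exact (eqOn_iterate_dirDeriv hU (eqOn_dirDeriv_iterate_comm hU hf v w n) v m).trans
      (ih (contDiffOn_dirDeriv hU hf v))

theorem deriv_section_snd (f : ℝ × ℝ → F) (x y : ℝ) :
    deriv (fun y' => f (x, y')) y = dirDeriv (0, 1) f (x, y) := by
  simpa [dirDeriv, lineDeriv] using
    (deriv_comp_const_add (f := fun y' => f (x, y')) (a := y) (x := 0)).symm

theorem iteratedDeriv_section_snd (f : ℝ × ℝ → F) (n : ℕ) (x y : ℝ) :
    iteratedDeriv n (fun y' => f (x, y')) y = (dirDeriv (0, 1))^[n] f (x, y) := by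
  induction n generalizing y with
  | zero => rfl
  | succ n ih =>
    rw [iteratedDeriv_succ, funext ih, deriv_section_snd, Function.iterate_succ_apply']

theorem deriv_section_fst (f : ℝ × ℝ → F) (x y : ℝ) :
    deriv (fun x' => f (x', y)) x = dirDeriv (1, 0) f (x, y) := by
  simpa [dirDeriv, lineDeriv] using
    (deriv_comp_const_add (f := fun x' => f (x', y)) (a := x) (x := 0)).symm

theorem iteratedDeriv_section_fst (f : ℝ × ℝ → F) (n : ℕ) (x y : ℝ) :
    iteratedDeriv n (fun x' => f (x', y)) x = (dirDeriv (1, 0))^[n] f (x, y) := by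
  induction n generalizing x with
  | zero => rfl
  | succ n ih =>
    rw [iteratedDeriv_succ, funext ih, deriv_section_fst, Function.iterate_succ_apply']

theorem iteratedDeriv_iteratedDeriv_comm {U : Set (ℝ × ℝ)} (hU : IsOpen U) {f : ℝ × ℝ → F}
    (hf : ContDiffOn ℝ ∞ f U) {a b : ℝ} (hab : (a, b) ∈ U) (m n : ℕ) :
    iteratedDeriv m (fun x => iteratedDeriv n (fun y => f (x, y)) b) a =
      iteratedDeriv n (fun y => iteratedDeriv m (fun x => f (x, y)) a) b := by
  simp only [iteratedDeriv_section_snd, iteratedDeriv_section_fst]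
  exact eqOn_iterate_dirDeriv_comm hU hf _ _ m n hab

end PartialDerivatives

theorem iteratedDeriv_eqOn_of_hasDerivAt {𝕜 F : Type*} [NontriviallyNormedField 𝕜]
    [NormedAddCommGroup F] [NormedSpace 𝕜 F] {f : ℕ → 𝕜 → F} {U : Set 𝕜} (hU : IsOpen U)
    (hf : ∀ k, ∀ z ∈ U, HasDerivAt (f k) (f (k + 1) z) z) (n : ℕ) :
    Set.EqOn (iteratedDeriv n (f 0)) (f n) U := by
  induction n with
  | zero => exact fun _ _ => rfl
  | succ n ih =>
    intro z hz
    rw [iteratedDeriv_succ, (ih.eventuallyEq_of_mem (hU.mem_nhds hz)).deriv_eq]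
    exact (hf n z hz).deriv

theorem stirling2_eq_zero_of_lt : ∀ {n k : ℕ}, n < k → stirling2 n k = 0
  | 0, _ + 1, _ => rfl
  | n + 1, k + 1, h => by
    simp only [stirling2, stirling2_eq_zero_of_lt (by omega : n < k + 1),
      stirling2_eq_zero_of_lt (by omega : n < k), mul_zero]

theorem fallingFactorial_succ (s : ℝ) (l : ℕ) :
    fallingFactorial s (l + 1) = fallingFactorial s l * (s - l) :=
  prod_range_succ _ _

theorem sum_stirling2_succ_mul_fallingFactorial (s : ℝ) (j : ℕ) (T : ℕ → ℝ) :
    ∑ l ∈ range (j + 2), (stirling2 (j + 1) l : ℝ) * fallingFactorial s l * T l =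
      ∑ l ∈ range (j + 1), (stirling2 j l : ℝ) * fallingFactorial s l *
        (l * T l + (s - l) * T (l + 1)) := by
  have hshift : ∑ l ∈ range (j + 1), (l : ℝ) * stirling2 j l * fallingFactorial s l * T l =
      ∑ l ∈ range (j + 1), ((l + 1 : ℕ) : ℝ) * stirling2 j (l + 1) * fallingFactorial s (l + 1) *
        T (l + 1) := by
    rw [sum_range_succ', sum_range_succ _ j, stirling2_eq_zero_of_lt (Nat.lt_succ_self j)]
    simp
  have hsplit : ∑ l ∈ range (j + 1), (stirling2 j l : ℝ) * fallingFactorial s l *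
        (l * T l + (s - l) * T (l + 1)) =
      ∑ l ∈ range (j + 1), (l : ℝ) * stirling2 j l * fallingFactorial s l * T l +
        ∑ l ∈ range (j + 1), (stirling2 j l : ℝ) * fallingFactorial s (l + 1) * T (l + 1) := by
    rw [← sum_add_distrib]
    exact sum_congr rfl fun l _ => by rw [fallingFactorial_succ]; ring
  rw [hsplit, hshift, ← sum_add_distrib, sum_range_succ' _ (j + 1)]
  simp only [stirling2, Nat.cast_add, Nat.cast_mul, Nat.cast_zero, zero_mul, add_zero]
  exact sum_congr rfl fun l _ => by ring

theorem hasDerivAt_exp_mul_mul_const_add_exp_rpow (s c r : ℝ) {z : ℝ} (hz : 0 < c + exp z) :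
    HasDerivAt (fun z => exp (r * z) * (c + exp z) ^ (s - r))
      (r * (exp (r * z) * (c + exp z) ^ (s - r)) +
        (s - r) * (exp ((r + 1) * z) * (c + exp z) ^ (s - (r + 1)))) z := by
  have hexp : HasDerivAt (fun z => exp (r * z)) (exp (r * z) * (r * 1)) z :=
    ((hasDerivAt_id z).const_mul r).exp
  have hpow := ((hasDerivAt_exp z).const_add c).rpow_const (p := s - r) (Or.inl hz.ne')
  refine (hexp.mul hpow).congr_deriv ?_
  rw [add_mul, one_mul, exp_add, show s - (r + 1) = s - r - 1 by ring]
  ring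

theorem iteratedDeriv_const_add_exp_rpow (s c : ℝ) (j : ℕ) {z : ℝ} (hz : 0 < c + exp z) :
    iteratedDeriv j (fun z => (c + exp z) ^ s) z =
      ∑ l ∈ range (j + 1), (stirling2 j l : ℝ) * fallingFactorial s l *
        (exp (l * z) * (c + exp z) ^ (s - l)) := by
  set D : ℕ → ℝ → ℝ := fun j z => ∑ l ∈ range (j + 1), (stirling2 j l : ℝ) *
    fallingFactorial s l * (exp (l * z) * (c + exp z) ^ (s - l))
  have hD : ∀ j, ∀ z ∈ {z | 0 < c + exp z}, HasDerivAt (D j) (D (j + 1) z) z := by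
    intro j z hz
    simp only [D, sum_stirling2_succ_mul_fallingFactorial]
    refine (HasDerivAt.fun_sum fun (l : ℕ) _ =>
      (hasDerivAt_exp_mul_mul_const_add_exp_rpow s c l hz).const_mul
        ((stirling2 j l : ℝ) * fallingFactorial s l)).congr_deriv ?_
    push_cast
    rfl
  have hD0 : D 0 = fun z => (c + exp z) ^ s := by
    funext z
    simp [D, stirling2, fallingFactorial]
  rw [← hD0]
  exact iteratedDeriv_eqOn_of_hasDerivAt (isOpen_lt continuous_const (by fun_prop)) hD j hz

theorem iteratedDeriv_exp_sub_one_add_exp_rpow_zero (s y : ℝ) (j : ℕ) :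
    iteratedDeriv j (fun z => (exp y - 1 + exp z) ^ s) 0 =
      ∑ l ∈ range (j + 1), (stirling2 j l : ℝ) * fallingFactorial s l * exp ((s - l) * y) := by
  rw [iteratedDeriv_const_add_exp_rpow s _ j (by simp [exp_pos])]
  simp [← exp_mul, mul_comm y]

theorem iteratedDeriv_exp_rpow_mul_exp_rpow_zero (α β y : ℝ) (m : ℕ) :
    iteratedDeriv m (fun x => (exp (-x) + exp (-y) - 1) ^ α * (exp x + exp y - 1) ^ β) 0 =
      ∑ m' ∈ range (m + 1), ∑ l1 ∈ range (m' + 1), ∑ l2 ∈ range (m - m' + 1),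
        (m.choose m' : ℝ) * stirling2 m' l1 * stirling2 (m - m') l2 * (-1) ^ (m - m') *
          fallingFactorial β l1 * fallingFactorial α l2 * exp ((β - α - l1 + l2) * y) := by
  set f : ℝ → ℝ := fun z => (exp y - 1 + exp z) ^ β
  set g : ℝ → ℝ := fun z => (exp (-y) - 1 + exp z) ^ α
  have hprod : (fun x => (exp (-x) + exp (-y) - 1) ^ α * (exp x + exp y - 1) ^ β) =
      f * fun x => g (-x) := by
    funext x
    simp only [f, g, Pi.mul_apply]
    ring_nf
  have hf : ContDiffAt ℝ m f 0 := by fun_prop (disch := simp [exp_ne_zero])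
  have hg : ContDiffAt ℝ m (fun x => g (-x)) 0 := by fun_prop (disch := simp [exp_ne_zero])
  rw [hprod, iteratedDeriv_mul hf hg]
  refine sum_congr rfl fun m' _ => ?_
  rw [iteratedDeriv_comp_neg, neg_zero, iteratedDeriv_exp_sub_one_add_exp_rpow_zero,
    iteratedDeriv_exp_sub_one_add_exp_rpow_zero, smul_eq_mul]
  simp only [mul_sum, sum_mul]
  rw [sum_comm]
  refine sum_congr rfl fun l1 _ => sum_congr rfl fun l2 _ => ?_
  rw [show (β - α - l1 + l2) * y = (β - l1) * y + (α - l2) * -y by ring, exp_add]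
  ring

/-- Closed formula for
`∂_x^m ∂_y^n [(e^{-x} + e^{-y} - 1)^{(-1-t)/2} (e^x + e^y - 1)^{(1-t)/2}]`
at `(x,y) = (0,0)`, where the powers are real powers `a ^ b = exp (b * log a)`. -/
theorem mixed_deriv_product_formula (t : ℝ) (m n : ℕ) :
    iteratedDeriv m (fun x : ℝ =>
        iteratedDeriv n (fun y : ℝ =>
          (Real.exp (-x) + Real.exp (-y) - 1) ^ ((-1 - t) / 2) *
            (Real.exp x + Real.exp y - 1) ^ ((1 - t) / 2)) 0) 0 =
      ∑ m' ∈ Finset.range (m + 1), ∑ l1 ∈ Finset.range (m' + 1),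
        ∑ l2 ∈ Finset.range (m - m' + 1),
          (m.choose m' : ℝ) * (stirling2 m' l1 : ℝ) * (stirling2 (m - m') l2 : ℝ) *
            (-1 : ℝ) ^ (m - m') * fallingFactorial ((1 - t) / 2) l1 *
            fallingFactorial ((-1 - t) / 2) l2 * ((1 : ℝ) - l1 + l2) ^ n := by
  set U : Set (ℝ × ℝ) :=
    {p | 0 < exp (-p.1) + exp (-p.2) - 1} ∩ {p | 0 < exp p.1 + exp p.2 - 1}
  have hU : IsOpen U :=
    (isOpen_lt continuous_const (by fun_prop)).inter (isOpen_lt continuous_const (by fun_prop))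
  have hsmooth : ContDiffOn ℝ ∞ (fun p : ℝ × ℝ =>
      (exp (-p.1) + exp (-p.2) - 1) ^ ((-1 - t) / 2) *
        (exp p.1 + exp p.2 - 1) ^ ((1 - t) / 2)) U := fun p hp => by
    simp only [U, Set.mem_inter_iff, Set.mem_ofPred_eq] at hp
    have := hp.1.ne'
    have := hp.2.ne'
    exact ContDiffAt.contDiffWithinAt (by fun_prop (disch := assumption))
  rw [iteratedDeriv_iteratedDeriv_comm hU hsmooth (by simp [U]) m n]
  simp_rw [iteratedDeriv_exp_rpow_mul_exp_rpow_zero]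
  simp (disch := intros; fun_prop) only [iteratedDeriv_fun_sum, iteratedDeriv_const_mul_field,
    iteratedDeriv_exp_const_mul, mul_zero, exp_zero, mul_one]
  refine sum_congr rfl fun m' _ => sum_congr rfl fun l1 _ => sum_congr rfl fun l2 _ => ?_
  rw [show (1 - t) / 2 - (-1 - t) / 2 - l1 + l2 = (1 : ℝ) - l1 + l2 by ring]
end

section
/- Fix a positive integer m. Then the quotient [ Σ_{k=0}^{m} (k!)² · S(n+1, k+1) · S(m+1, k+1) ] / [ m! · (m+1)^n ] tends to 1 as n → ∞, where S(a,b) denotes the Stirling number of the second kind. (The numerator is the poly-Bernoulli number B_n^{(−m)}.) -/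
/-!
Inclusion–exclusion gives `k! S(n, k) = Σ_{i ≤ k} (-1)^i C(k, i) (k - i)^n`, so
`S(n + 1, k + 1) / (k + 1)^n → 1 / k!`: all terms but `i = 0` are geometric with ratio `< 1`.
Hence in `B_n^{(-m)} / (m! (m + 1)^n)` the summands with `k < m` grow like `(k + 1)^n` and vanish
in the limit, while the summand `k = m` (where `S(m + 1, m + 1) = 1`) tends to `m! · (1 / m!) = 1`.
-/

open Filter Topology Finset

theorem stirling2_eq_stirlingSecond : stirling2 = Nat.stirlingSecond := by
  funext n k
  induction n generalizing k with
  | zero => cases k <;> rfl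
  | succ n ih => cases k <;> simp [stirling2, Nat.stirlingSecond_succ_succ, ih]

theorem Nat.factorial_mul_stirlingSecond {R : Type*} [CommRing R] (n k : ℕ) :
    (k.factorial : R) * n.stirlingSecond k =
      ∑ i ∈ range (k + 1), (-1) ^ i * (k.choose i : R) * ((k : R) - i) ^ n := by
  induction n generalizing k with
  | zero =>
    cases k with
    | zero => simp
    | succ k =>
      have h := congrArg (Int.cast : ℤ → R) (Int.alternating_sum_range_choose (n := k + 1))
      push_cast at h
      simpa using h.symm
  | succ n ih =>
    cases k with
    | zero => simp
    | succ k =>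
      have hrec : ((k + 1).factorial : R) * (n + 1).stirlingSecond (k + 1) =
          (k + 1) * ((k + 1).factorial * n.stirlingSecond (k + 1)) +
            (k + 1) * (k.factorial * n.stirlingSecond k) := by
        rw [Nat.stirlingSecond_succ_succ, Nat.factorial_succ]
        push_cast
        ring
      have hsplit : ∑ i ∈ range (k + 2),
            (-1) ^ i * ((k + 1).choose i : R) * ((k + 1 : ℕ) - (i : R)) ^ (n + 1) =
          (k + 1) * ∑ i ∈ range (k + 2),
              (-1) ^ i * ((k + 1).choose i : R) * ((k + 1 : ℕ) - (i : R)) ^ n -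
            ∑ i ∈ range (k + 2),
              (-1) ^ i * ((k + 1).choose i : R) * i * ((k + 1 : ℕ) - (i : R)) ^ n := by
        rw [mul_sum, ← sum_sub_distrib]
        refine sum_congr rfl fun i _ ↦ ?_
        push_cast
        ring
      -- `i C(k + 1, i) = (k + 1) C(k, i - 1)` turns the second sum into the one for `S(n, k)`
      have hshift : ∑ i ∈ range (k + 2),
            (-1) ^ i * ((k + 1).choose i : R) * i * ((k + 1 : ℕ) - (i : R)) ^ n =
          -((k + 1) * ∑ i ∈ range (k + 1), (-1) ^ i * (k.choose i : R) * ((k : R) - i) ^ n) := by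
        rw [sum_range_succ', mul_sum, ← sum_neg_distrib]
        simp only [Nat.cast_zero, mul_zero, zero_mul, add_zero]
        refine sum_congr rfl fun i _ ↦ ?_
        have hc := congrArg (Nat.cast : ℕ → R) (Nat.add_one_mul_choose_eq k i)
        push_cast at hc ⊢
        linear_combination (-1) ^ i * ((k : R) - i) ^ n * hc
      rw [hrec, ih, ih, hsplit, hshift]
      ring

theorem Nat.tendsto_stirlingSecond_succ_div_pow (k : ℕ) :
    Tendsto (fun n ↦ ((n + 1).stirlingSecond (k + 1) : ℝ) / (k + 1) ^ n) atTop
      (𝓝 (1 / k.factorial : ℝ)) := by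
  set c : ℕ → ℝ := fun i ↦ (-1) ^ (i + 1) * ((k + 1).choose (i + 1) : ℝ) * (k - i)
  have hk : (0 : ℝ) < k + 1 := by positivity
  have hform : ∀ n, ((n + 1).stirlingSecond (k + 1) : ℝ) / (k + 1) ^ n =
      ((k + 1) + ∑ i ∈ range (k + 1), c i * ((k - i) / (k + 1)) ^ n) / (k + 1).factorial := by
    intro n
    have h := Nat.factorial_mul_stirlingSecond (R := ℝ) (n + 1) (k + 1)
    rw [sum_range_succ'] at h
    have key : ((k + 1).factorial : ℝ) * (n + 1).stirlingSecond (k + 1) =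
        (k + 1) ^ n * ((k + 1) + ∑ i ∈ range (k + 1), c i * ((k - i) / (k + 1)) ^ n) := by
      rw [h, add_comm, mul_add, mul_sum]
      congr 1
      · push_cast [Nat.choose_zero_right]
        ring
      · refine sum_congr rfl fun i _ ↦ ?_
        simp only [c, div_pow]
        field_simp
        push_cast
        ring
    field_simp
    linear_combination key
  have hrest : Tendsto (fun n ↦ ∑ i ∈ range (k + 1), c i * ((k - i) / (k + 1) : ℝ) ^ n) atTop
      (𝓝 0) := by
    simpa using tendsto_finsetSum (range (k + 1)) fun i hi ↦
      (tendsto_pow_atTop_nhds_zero_of_lt_one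
        (div_nonneg (sub_nonneg.mpr (by exact_mod_cast (mem_range_succ_iff.mp hi))) hk.le)
        ((div_lt_one hk).mpr (by linarith [(i.cast_nonneg : (0 : ℝ) ≤ i)]))).const_mul (c i)
  have hlim : (1 / k.factorial : ℝ) = ((k + 1) + 0) / (k + 1).factorial := by
    push_cast [add_zero, Nat.factorial_succ]
    field_simp
  rw [funext hform, hlim]
  exact (tendsto_const_nhds.add hrest).div_const _

theorem Nat.tendsto_stirlingSecond_succ_div_pow_of_lt {k : ℕ} {r : ℝ} (hr : k + 1 < r) :
    Tendsto (fun n ↦ ((n + 1).stirlingSecond (k + 1) : ℝ) / r ^ n) atTop (𝓝 0) := by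
  have hk : (0 : ℝ) < k + 1 := by positivity
  have hratio := tendsto_pow_atTop_nhds_zero_of_lt_one (div_nonneg hk.le (hk.trans hr).le)
    ((div_lt_one (hk.trans hr)).mpr hr)
  simpa [div_pow, div_mul_div_cancel₀ (pow_ne_zero _ hk.ne')] using
    (Nat.tendsto_stirlingSecond_succ_div_pow k).mul hratio

theorem polyBernoulli_asymptotic_general (m : ℕ) :
    Filter.Tendsto
      (fun n : ℕ =>
        ((∑ k ∈ Finset.range (m + 1),
            k.factorial ^ 2 * stirling2 (n + 1) (k + 1) * stirling2 (m + 1) (k + 1) : ℕ) : ℝ) /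
          (m.factorial * (m + 1 : ℝ) ^ n))
      Filter.atTop (nhds 1) := by
  set a : ℕ → ℝ := fun k ↦ k.factorial ^ 2 * (m + 1).stirlingSecond (k + 1) / m.factorial
  have hsplit : ∀ n, ((∑ k ∈ range (m + 1), k.factorial ^ 2 * stirling2 (n + 1) (k + 1) *
        stirling2 (m + 1) (k + 1) : ℕ) : ℝ) / (m.factorial * (m + 1 : ℝ) ^ n) =
      ∑ k ∈ range m, a k * ((n + 1).stirlingSecond (k + 1) / (m + 1 : ℝ) ^ n) +
        m.factorial * ((n + 1).stirlingSecond (m + 1) / (m + 1 : ℝ) ^ n) := by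
    intro n
    rw [stirling2_eq_stirlingSecond, Nat.cast_sum, sum_div, sum_range_succ]
    congr 1
    · refine sum_congr rfl fun k _ ↦ ?_
      simp only [a]
      push_cast
      field_simp
    · rw [Nat.stirlingSecond_self]
      push_cast
      field_simp
  have hlower : Tendsto (fun n ↦ ∑ k ∈ range m,
      a k * ((n + 1).stirlingSecond (k + 1) / (m + 1 : ℝ) ^ n)) atTop (𝓝 0) := by
    simpa using tendsto_finsetSum (range m) fun k hk ↦
      (Nat.tendsto_stirlingSecond_succ_div_pow_of_lt
        (by exact_mod_cast Nat.succ_lt_succ (mem_range.mp hk))).const_mul (a k)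
  have htop : Tendsto (fun n ↦ m.factorial * ((n + 1).stirlingSecond (m + 1) / (m + 1 : ℝ) ^ n))
      atTop (𝓝 1) := by
    have h := (Nat.tendsto_stirlingSecond_succ_div_pow m).const_mul (m.factorial : ℝ)
    rwa [mul_one_div_cancel (by positivity)] at h
  simpa only [hsplit, zero_add] using hlower.add htop

/-- For fixed `m ≥ 1`, the poly-Bernoulli number
`B_n^{(-m)} = Σ_{k=0}^{m} (k!)² S(n+1,k+1) S(m+1,k+1)` is asymptotic to
`m! (m+1)^n` as `n → ∞`. -/
theorem polyBernoulli_asymptotic (m : ℕ) (hm : 0 < m) :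
    Filter.Tendsto
      (fun n : ℕ =>
        ((∑ k ∈ Finset.range (m + 1),
            k.factorial ^ 2 * stirling2 (n + 1) (k + 1) * stirling2 (m + 1) (k + 1) : ℕ) : ℝ) /
          (m.factorial * (m + 1 : ℝ) ^ n))
      Filter.atTop (nhds 1) :=
  polyBernoulli_asymptotic_general m
end
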